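/- Let ℒ(x) = coth(x) - 1/x for x > 0. Then the matrix-valued function K(y) = ℒ'(‖y‖)·(y yᵀ/‖y‖²) + (ℒ(‖y‖)/‖y‖)·(I - y yᵀ/‖y‖²), defined for y ∈ ℝⁿ \ {0}, extends continuously to y = 0 with value K(0) = (1/3)·I. -/

import Mathlib

/-!
With `r = ‖y‖` and `P(y) = y yᵀ / ‖y‖²` (whose entries are bounded by `1`), the kernel is
`K(y) = ℒ(r)/r • I + (ℒ'(r) - ℒ(r)/r) • P(y)`, so it suffices that `ℒ(x)/x` and `ℒ'(x)` both tend
to `1/3`. The identities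
`ℒ(x)/x = ((cosh x - 1)/x² - (sinh x - x)/x³) · x/sinh x` and
`ℒ'(x) = 1/x² - 1/sinh² x = (sinh x - x)/x³ · (sinh x/x + 1) · (x/sinh x)²`
reduce this to the limits `1`, `1/2`, `1/6` of `sinh x/x`, `(cosh x - 1)/x²`, `(sinh x - x)/x³`,
each of which follows from the previous one by l'Hôpital's rule.
-/

open Filter Topology

noncomputable def Real.coth (x : ℝ) : ℝ := Real.cosh x / Real.sinh x

/-- The Langevin function `ℒ(x) = coth x - 1/x`. -/
noncomputable def langevin (x : ℝ) : ℝ := Real.coth x - 1 / x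

/-- The matrix-valued MPI kernel
`K(y) = ℒ'(‖y‖)·(y yᵀ/‖y‖²) + (ℒ(‖y‖)/‖y‖)·(I - y yᵀ/‖y‖²)` for `y ≠ 0`. -/
noncomputable def mpiKernel {n : ℕ} (y : EuclideanSpace ℝ (Fin n)) :
    Matrix (Fin n) (Fin n) ℝ :=
  deriv langevin ‖y‖ • ((‖y‖ ^ 2)⁻¹ • Matrix.of fun i j => y i * y j) +
    (langevin ‖y‖ / ‖y‖) •
      ((1 : Matrix (Fin n) (Fin n) ℝ) - (‖y‖ ^ 2)⁻¹ • Matrix.of fun i j => y i * y j)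

namespace Real

theorem tendsto_sinh_div_self : Tendsto (fun x => sinh x / x) (𝓝[≠] 0) (𝓝 1) := by
  simpa [div_eq_inv_mul] using (hasDerivAt_sinh 0).tendsto_slope_zero

theorem tendsto_cosh_sub_one_div_sq :
    Tendsto (fun x => (cosh x - 1) / x ^ 2) (𝓝[≠] 0) (𝓝 (1 / 2)) := by
  refine HasDerivAt.lhopital_zero_nhdsNE (f' := sinh) (g' := fun x => 2 * x)
    (.of_forall fun x => by simpa using (hasDerivAt_cosh x).sub_const 1)
    (.of_forall fun x => by simpa using hasDerivAt_pow 2 x)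
    (eventually_mem_nhdsWithin.mono fun x hx => mul_ne_zero two_ne_zero hx)
    (tendsto_nhdsWithin_of_tendsto_nhds (Continuous.tendsto' (by fun_prop) _ _ (by simp)))
    (tendsto_nhdsWithin_of_tendsto_nhds (Continuous.tendsto' (by fun_prop) _ _ (by simp))) ?_
  simpa [div_mul_eq_div_div_swap] using tendsto_sinh_div_self.div_const 2

theorem tendsto_sinh_sub_self_div_cube :
    Tendsto (fun x => (sinh x - x) / x ^ 3) (𝓝[≠] 0) (𝓝 (1 / 6)) := by
  refine HasDerivAt.lhopital_zero_nhdsNE (f' := fun x => cosh x - 1) (g' := fun x => 3 * x ^ 2)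
    (.of_forall fun x => (hasDerivAt_sinh x).sub (hasDerivAt_id' x))
    (.of_forall fun x => by simpa using hasDerivAt_pow 3 x)
    (eventually_mem_nhdsWithin.mono fun x hx => mul_ne_zero three_ne_zero (pow_ne_zero 2 hx))
    (tendsto_nhdsWithin_of_tendsto_nhds (Continuous.tendsto' (by fun_prop) _ _ (by simp)))
    (tendsto_nhdsWithin_of_tendsto_nhds (Continuous.tendsto' (by fun_prop) _ _ (by simp))) ?_
  convert tendsto_cosh_sub_one_div_sq.div_const 3 using 2 <;> ring

end Real

theorem langevin_div_self_eq {x : ℝ} (hx : x ≠ 0) :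
    langevin x / x =
      ((Real.cosh x - 1) / x ^ 2 - (Real.sinh x - x) / x ^ 3) * (x / Real.sinh x) := by
  have hs : Real.sinh x ≠ 0 := Real.sinh_ne_zero.2 hx
  simp only [langevin, Real.coth]
  field_simp
  ring

theorem hasDerivAt_langevin {x : ℝ} (hx : x ≠ 0) :
    HasDerivAt langevin (1 / x ^ 2 - 1 / Real.sinh x ^ 2) x := by
  have hs : Real.sinh x ≠ 0 := Real.sinh_ne_zero.2 hx
  have hL : langevin = fun y => Real.cosh y / Real.sinh y - y⁻¹ := by
    funext y
    simp only [langevin, Real.coth, one_div]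
  rw [hL]
  refine ((Real.hasDerivAt_cosh x).div (Real.hasDerivAt_sinh x) hs).sub (hasDerivAt_inv hx)
    |>.congr_deriv ?_
  field_simp
  linear_combination (-(x ^ 2)) * Real.cosh_sq x

theorem deriv_langevin_eq {x : ℝ} (hx : x ≠ 0) :
    deriv langevin x =
      (Real.sinh x - x) / x ^ 3 * (Real.sinh x / x + 1) * (x / Real.sinh x) ^ 2 := by
  have hs : Real.sinh x ≠ 0 := Real.sinh_ne_zero.2 hx
  rw [(hasDerivAt_langevin hx).deriv]
  field_simp
  ring

theorem tendsto_langevin_div_self :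
    Tendsto (fun x => langevin x / x) (𝓝[≠] 0) (𝓝 (1 / 3)) := by
  have hlim := (Real.tendsto_cosh_sub_one_div_sq.sub Real.tendsto_sinh_sub_self_div_cube).mul
    (Real.tendsto_sinh_div_self.inv₀ one_ne_zero)
  refine (hlim.congr' (eventually_mem_nhdsWithin.mono fun x hx => ?_)).trans_eq (by norm_num)
  simp [langevin_div_self_eq hx]

theorem tendsto_deriv_langevin : Tendsto (deriv langevin) (𝓝[≠] 0) (𝓝 (1 / 3)) := by
  have hlim := (Real.tendsto_sinh_sub_self_div_cube.mul
    (Real.tendsto_sinh_div_self.add_const 1)).mul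
    ((Real.tendsto_sinh_div_self.inv₀ one_ne_zero).pow 2)
  refine (hlim.congr' (eventually_mem_nhdsWithin.mono fun x hx => ?_)).trans_eq (by norm_num)
  simp [deriv_langevin_eq hx]

theorem Matrix.tendsto_smul_add_smul_one_sub {ι m : Type*} [DecidableEq m] {l : Filter ι}
    {a b : ι → ℝ} {P : ι → Matrix m m ℝ} {c : ℝ} (ha : Tendsto a l (𝓝 c))
    (hb : Tendsto b l (𝓝 c)) (hP : ∀ i j, IsBoundedUnder (· ≤ ·) l fun t => ‖P t i j‖) :
    Tendsto (fun t => a t • P t + b t • (1 - P t)) l (𝓝 (c • 1)) := by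
  refine tendsto_pi_nhds.2 fun i => tendsto_pi_nhds.2 fun j => ?_
  have hdiff : Tendsto (fun t => a t - b t) l (𝓝 0) := by simpa using ha.sub hb
  have hsmall : Tendsto (fun t => (a t - b t) * P t i j) l (𝓝 0) :=
    hdiff.zero_mul_isBoundedUnder_le (hP i j)
  convert (hb.mul_const ((1 : Matrix m m ℝ) i j)).add hsmall using 1
  · ext t
    simp only [Matrix.add_apply, Matrix.smul_apply, Matrix.sub_apply, smul_eq_mul]
    ring
  · simp

/-- The orthogonal projection onto `ℝ ∙ y`, and `0` for `y = 0`. -/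
noncomputable def EuclideanSpace.radialProjection {ι : Type*} [Fintype ι]
    (y : EuclideanSpace ℝ ι) : Matrix ι ι ℝ :=
  (‖y‖ ^ 2)⁻¹ • Matrix.of fun i j => y i * y j

theorem EuclideanSpace.abs_radialProjection_apply_le_one {ι : Type*} [Fintype ι]
    (y : EuclideanSpace ℝ ι) (i j : ι) : |radialProjection y i j| ≤ 1 := by
  rcases eq_or_ne y 0 with rfl | hy
  · simp [radialProjection]
  have hsq : 0 < ‖y‖ ^ 2 := by positivity
  have hcoord : |y i| * |y j| ≤ ‖y‖ ^ 2 := by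
    rw [sq]
    exact mul_le_mul (PiLp.norm_apply_le y i) (PiLp.norm_apply_le y j) (abs_nonneg _)
      (norm_nonneg _)
  simp only [radialProjection, Matrix.smul_apply, Matrix.of_apply, smul_eq_mul, abs_mul,
    abs_inv, abs_of_pos hsq]
  rwa [inv_mul_le_iff₀ hsq, mul_one]

theorem mpiKernel_eq_radialProjection {n : ℕ} (y : EuclideanSpace ℝ (Fin n)) :
    mpiKernel y = deriv langevin ‖y‖ • EuclideanSpace.radialProjection y +
      (langevin ‖y‖ / ‖y‖) • (1 - EuclideanSpace.radialProjection y) :=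
  rfl

/-- The MPI kernel extends continuously to `y = 0` with value `(1/3)·I`. -/
theorem mpiKernel_tendsto_zero {n : ℕ} :
    Tendsto (fun y : EuclideanSpace ℝ (Fin n) => mpiKernel y)
      (𝓝[≠] (0 : EuclideanSpace ℝ (Fin n)))
      (𝓝 ((1 / 3 : ℝ) • (1 : Matrix (Fin n) (Fin n) ℝ))) := by
  have hnorm : Tendsto (‖·‖) (𝓝[≠] (0 : EuclideanSpace ℝ (Fin n))) (𝓝[≠] 0) :=
    tendsto_norm_nhdsNE_zero.mono_right (nhdsWithin_mono _ fun _ hx => ne_of_gt hx)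
  simp only [mpiKernel_eq_radialProjection]
  exact Matrix.tendsto_smul_add_smul_one_sub (tendsto_deriv_langevin.comp hnorm)
    (tendsto_langevin_div_self.comp hnorm) fun i j =>
      isBoundedUnder_of ⟨1, fun y => EuclideanSpace.abs_radialProjection_apply_le_one y i j⟩
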